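/- Let G be a genome over alphabet Σ, let c be a CNP on Σ, and let s ∈ Σ. Then d_GCNP(G − s, c − s) ≤ d_GCNP(G, c), where G − s is the subsequence of G obtained by removing all occurrences of s and c − s is the CNP obtained from c by setting its value at s to 0. (In particular, if some event sequence of length k transforms G into a genome with CNP c, then some event sequence of length at most k transforms G − s into a genome with CNP c − s.) -/

import Mathlib

/-- An event is either a deletion `del i j` (removing the substring from position `i`
to position `j`, 1-based) or a duplication `dup i j p` (copying the substring from
position `i` to position `j` and inserting the copy after position `p`). -/
inductive GEvent where
  | del (i j : ℕ)
  | dup (i j p : ℕ)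
deriving DecidableEq

/-- Applying an event to a genome (a list of characters). -/
def applyEvent {α : Type*} (G : List α) : GEvent → List α
  | .del i j => G.take (i - 1) ++ G.drop j
  | .dup i j p => G.take p ++ ((G.drop (i - 1)).take (j - i + 1)) ++ G.drop p

/-- Validity of an event on a genome: `del i j` requires `1 ≤ i ≤ j ≤ |G|`;
`dup i j p` requires `1 ≤ i ≤ j ≤ |G|` and `p ∈ {0,…,i−1} ∪ {j,…,|G|}`. -/
def GEvent.Valid {α : Type*} (G : List α) : GEvent → Prop
  | .del i j => 1 ≤ i ∧ i ≤ j ∧ j ≤ G.length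
  | .dup i j p => 1 ≤ i ∧ i ≤ j ∧ j ≤ G.length ∧ (p ≤ i - 1 ∨ (j ≤ p ∧ p ≤ G.length))

/-- `applyEvents G E` is `G⟨E⟩`, the genome obtained by successively applying
the events of `E` to `G`. -/
def applyEvents {α : Type*} (G : List α) : List GEvent → List α
  | [] => G
  | e :: E => applyEvents (applyEvent G e) E

/-- A sequence of events is valid on `G` if each event is valid on the genome
obtained by applying the previous events. -/
def ValidSeq {α : Type*} (G : List α) : List GEvent → Prop
  | [] => True
  | e :: E => e.Valid G ∧ ValidSeq (applyEvent G e) E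

/-- The copy-number profile of a genome: the number of occurrences of each character. -/
def cnp {α : Type*} [DecidableEq α] (G : List α) : α → ℕ := fun s => G.count s

/-- The Genome-to-CNP distance: the minimum length of a valid event sequence turning `G`
into a genome with CNP `c` (`⊤` if there is none). -/
noncomputable def dGCNP {α : Type*} [DecidableEq α] (G : List α) (c : α → ℕ) : ℕ∞ :=
  sInf { k : ℕ∞ | ∃ E : List GEvent,
    ValidSeq G E ∧ (E.length : ℕ∞) = k ∧ cnp (applyEvents G E) = c }

/-! Deleting the occurrences of `s` from every intermediate genome turns a scenario for `G` into
a scenario for `G − s` that is at most as long. An event on the segment `i..j` of a genome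
commutes with the deletion once `i` and `j` are replaced by the numbers of kept characters
before `i` and up to `j`; if the segment contains no kept character, the event does not change
the filtered genome and is dropped. -/

namespace List

variable {α : Type*} (P : α → Bool)

/-- The position in `G.filter P` corresponding to the position `p` in `G`. -/
def filterPos (G : List α) (p : ℕ) : ℕ := (G.take p).countP P

variable {P}

theorem filterPos_mono (G : List α) {p q : ℕ} (h : p ≤ q) :
    filterPos P G p ≤ filterPos P G q :=
  (take_sublist_take_left h).countP_le

theorem filterPos_le_length_filter (G : List α) (p : ℕ) :
    filterPos P G p ≤ (G.filter P).length := by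
  rw [← countP_eq_length_filter]
  exact (take_sublist _ _).countP_le

theorem filterPos_add (G : List α) (m n : ℕ) :
    filterPos P G (m + n) = filterPos P G m + filterPos P (G.drop m) n := by
  simp only [filterPos, take_add, countP_append]

theorem filter_eq_filter_take_append_filter_drop (G : List α) (p : ℕ) :
    G.filter P = (G.take p).filter P ++ (G.drop p).filter P := by
  rw [← filter_append, take_append_drop]

theorem take_filterPos_filter (G : List α) (p : ℕ) :
    (G.filter P).take (filterPos P G p) = (G.take p).filter P := by
  rw [filterPos, countP_eq_length_filter, filter_eq_filter_take_append_filter_drop G p, take_left]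

theorem drop_filterPos_filter (G : List α) (p : ℕ) :
    (G.filter P).drop (filterPos P G p) = (G.drop p).filter P := by
  rw [filterPos, countP_eq_length_filter, filter_eq_filter_take_append_filter_drop G p, drop_left]

end List

open List

theorem applyEvents_append {α : Type*} (G : List α) (E F : List GEvent) :
    applyEvents G (E ++ F) = applyEvents (applyEvents G E) F := by
  induction E generalizing G with
  | nil => rfl
  | cons e E ih => exact ih _

theorem validSeq_append {α : Type*} {G : List α} {E F : List GEvent} (hE : ValidSeq G E)
    (hF : ValidSeq (applyEvents G E) F) : ValidSeq G (E ++ F) := by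
  induction E generalizing G with
  | nil => exact hF
  | cons e E ih => exact ⟨hE.1, ih hE.2 hF⟩

section FilterEvent

variable {α : Type*} (P : α → Bool) (G : List α)

theorem filter_applyEvent_del (i j : ℕ) :
    (applyEvent G (.del i j)).filter P =
      applyEvent (G.filter P) (.del (filterPos P G (i - 1) + 1) (filterPos P G j)) := by
  simp only [applyEvent, Nat.add_sub_cancel, filter_append, take_filterPos_filter,
    drop_filterPos_filter]

theorem filter_applyEvent_dup_of_filterPos_eq {i j : ℕ} (p : ℕ) (hi : 1 ≤ i) (hij : i ≤ j)
    (heq : filterPos P G (i - 1) = filterPos P G j) :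
    (applyEvent G (.dup i j p)).filter P = G.filter P := by
  have hsplit := filterPos_add G (i - 1) (j - i + 1) (P := P)
  rw [show i - 1 + (j - i + 1) = j by omega] at hsplit
  have hcopy : ((G.drop (i - 1)).take (j - i + 1)).filter P = [] := by
    rw [← take_filterPos_filter, show filterPos P (G.drop (i - 1)) (j - i + 1) = 0 by omega,
      take_zero]
  rw [applyEvent, filter_append, filter_append, hcopy, append_nil, ← take_filterPos_filter,
    ← drop_filterPos_filter, take_append_drop]

theorem filter_applyEvent_dup {i j : ℕ} (p : ℕ) (hi : 1 ≤ i) (hij : i ≤ j)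
    (hlt : filterPos P G (i - 1) < filterPos P G j) :
    (applyEvent G (.dup i j p)).filter P =
      applyEvent (G.filter P) (.dup (filterPos P G (i - 1) + 1) (filterPos P G j)
        (filterPos P G p)) := by
  have hsplit := filterPos_add G (i - 1) (j - i + 1) (P := P)
  rw [show i - 1 + (j - i + 1) = j by omega] at hsplit
  have hlen : filterPos P G j - (filterPos P G (i - 1) + 1) + 1
      = filterPos P (G.drop (i - 1)) (j - i + 1) := by omega
  simp only [applyEvent, Nat.add_sub_cancel, hlen, filter_append, take_filterPos_filter,
    drop_filterPos_filter]

theorem exists_validSeq_filter_applyEvent {e : GEvent} (he : e.Valid G) :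
    ∃ E : List GEvent, E.length ≤ 1 ∧ ValidSeq (G.filter P) E ∧
      applyEvents (G.filter P) E = (applyEvent G e).filter P := by
  cases e with
  | del i j =>
    obtain ⟨hi, hij, hj⟩ := he
    rcases (filterPos_mono G (show i - 1 ≤ j by omega) (P := P)).eq_or_lt with heq | hlt
    · refine ⟨[], zero_le_one, trivial, ?_⟩
      rw [filter_applyEvent_del, heq, applyEvent, Nat.add_sub_cancel, take_append_drop]
      rfl
    · exact ⟨[.del _ _], le_rfl, ⟨⟨by omega, hlt, filterPos_le_length_filter G j⟩, trivial⟩,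
        (filter_applyEvent_del P G i j).symm⟩
  | dup i j p =>
    obtain ⟨hi, hij, hj, hp⟩ := he
    rcases (filterPos_mono G (show i - 1 ≤ j by omega) (P := P)).eq_or_lt with heq | hlt
    · exact ⟨[], zero_le_one, trivial,
        (filter_applyEvent_dup_of_filterPos_eq P G p hi hij heq).symm⟩
    · refine ⟨[.dup _ _ _], le_rfl,
        ⟨⟨by omega, hlt, filterPos_le_length_filter G j, ?_⟩, trivial⟩,
        (filter_applyEvent_dup P G p hi hij hlt).symm⟩
      rcases hp with hp | ⟨hjp, hp⟩
      · exact Or.inl (by have := filterPos_mono G hp (P := P); omega)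
      · exact Or.inr ⟨filterPos_mono G hjp, filterPos_le_length_filter G p⟩

theorem exists_validSeq_filter_applyEvents {E : List GEvent} (hE : ValidSeq G E) :
    ∃ F : List GEvent, F.length ≤ E.length ∧ ValidSeq (G.filter P) F ∧
      applyEvents (G.filter P) F = (applyEvents G E).filter P := by
  induction E generalizing G with
  | nil => exact ⟨[], le_rfl, trivial, rfl⟩
  | cons e E ih =>
    obtain ⟨F₁, hlen₁, hvalid₁, happly₁⟩ := exists_validSeq_filter_applyEvent P G hE.1
    obtain ⟨F₂, hlen₂, hvalid₂, happly₂⟩ := ih (applyEvent G e) hE.2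
    refine ⟨F₁ ++ F₂, ?_, validSeq_append hvalid₁ (happly₁ ▸ hvalid₂), ?_⟩
    · simp only [length_append, length_cons]
      omega
    · rw [applyEvents_append, happly₁, happly₂]
      rfl

end FilterEvent

theorem cnp_filter_ne {α : Type*} [DecidableEq α] (G : List α) (s : α) :
    cnp (G.filter (· ≠ s)) = fun a => if a = s then 0 else cnp G a := by
  funext a
  split_ifs with ha
  · subst ha
    exact count_eq_zero.mpr fun h => by simp at h
  · simp [cnp, count_filter, ha]

/-- Proposition 1 of the paper: for a genome `G`, a CNP `c`
and a character `s`, we have `d_GCNP(G − s, c − s) ≤ d_GCNP(G, c)`, where `G − s`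
removes all occurrences of `s` from `G` and `c − s` sets the value of `c` at `s` to `0`.
(Since `d_GCNP` takes values in `ℕ∞`, this in particular says that if some event
sequence of length `k` transforms `G` into a genome with CNP `c`, then some event
sequence of length at most `k` transforms `G − s` into a genome with CNP `c − s`.) -/
theorem dGCNP_remove_char_le
    {α : Type*} [DecidableEq α] (G : List α) (c : α → ℕ) (s : α) :
    dGCNP (G.filter (· ≠ s)) (fun a => if a = s then 0 else c a) ≤ dGCNP G c := by
  refine le_sInf fun k ⟨E, hvalid, hk, hcnp⟩ => ?_
  obtain ⟨F, hlen, hvalidF, happly⟩ :=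
    exists_validSeq_filter_applyEvents (fun a => decide (a ≠ s)) G hvalid
  subst hk
  calc dGCNP (G.filter (· ≠ s)) (fun a => if a = s then 0 else c a)
      ≤ F.length := sInf_le ⟨F, hvalidF, rfl, by rw [happly, cnp_filter_ne, hcnp]⟩
    _ ≤ E.length := by exact_mod_cast hlen
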